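/- A point p lies in [X_0, X_K] and (p, v) is on the piecewise-linear curve through points (X_0,Y_0),...,(X_K,Y_K) with X_0 < X_1 < ... < X_K if and only if there exist nonnegative weights z_0,...,z_K summing to 1 with at most two nonzero weights, those being at consecutive indices, such that p = Σ_k X_k·z_k and v = Σ_k Y_k·z_k. -/

import Mathlib

/-!
Both sides say that `(p, v)` lies on the segment joining two consecutive breakpoints
`(X k, Y k)` and `(X (k+1), Y (k+1))`: the left side describes that segment as the graph of the
chord over `[X k, X (k+1)]`, the right side as the set of convex combinations of the
breakpoints with weights supported on `{k, k+1}`.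
-/

open Set

theorem Fintype.sum_eq_add_of_support_subset_pair {ι M : Type*} [Fintype ι] [AddCommMonoid M]
    {f : ι → M} {a b : ι} (hab : a ≠ b) (hf : ∀ j, f j ≠ 0 → j = a ∨ j = b) :
    ∑ j, f j = f a + f b :=
  Fintype.sum_eq_add a b hab fun j ⟨hja, hjb⟩ => by
    by_contra hj
    exact (hf j hj).elim hja hjb

theorem exists_weights_supported_on_pair_iff_mem_segment {𝕜 ι E : Type*} [Semiring 𝕜]
    [PartialOrder 𝕜] [IsOrderedRing 𝕜] [Fintype ι] [DecidableEq ι] [AddCommMonoid E] [Module 𝕜 E]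
    (P : ι → E) {a b : ι} (hab : a ≠ b) (q : E) :
    (∃ z : ι → 𝕜, (∀ j, 0 ≤ z j) ∧ ∑ j, z j = 1 ∧ (∀ j, z j ≠ 0 → j = a ∨ j = b) ∧
        q = ∑ j, z j • P j) ↔
      q ∈ segment 𝕜 (P a) (P b) := by
  have sum_smul_pair {z : ι → 𝕜} (hz : ∀ j, z j ≠ 0 → j = a ∨ j = b) :
      ∑ j, z j • P j = z a • P a + z b • P b :=
    Fintype.sum_eq_add_of_support_subset_pair hab fun j hj => hz j (left_ne_zero_of_smul hj)
  constructor
  · rintro ⟨z, hz0, hz1, hz, rfl⟩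
    refine ⟨z a, z b, hz0 a, hz0 b, ?_, (sum_smul_pair hz).symm⟩
    rwa [Fintype.sum_eq_add_of_support_subset_pair hab hz] at hz1
  · rintro ⟨s, t, hs, ht, hst, rfl⟩
    set z : ι → 𝕜 := Pi.single a s + Pi.single b t
    have hza : z a = s := by simp [z, hab.symm]
    have hzb : z b = t := by simp [z, hab]
    have hz : ∀ j, z j ≠ 0 → j = a ∨ j = b := by
      intro j hj
      by_contra! h
      simp [z, h.1, h.2] at hj
    have hz0 : 0 ≤ z := add_nonneg (Pi.single_nonneg.2 hs) (Pi.single_nonneg.2 ht)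
    refine ⟨z, hz0, ?_, hz, ?_⟩
    · rwa [Fintype.sum_eq_add_of_support_subset_pair hab hz, hza, hzb]
    · rw [sum_smul_pair hz, hza, hzb]

theorem mem_Icc_and_eq_chord_iff_mem_segment {𝕜 : Type*} [Field 𝕜] [LinearOrder 𝕜]
    [IsStrictOrderedRing 𝕜] {x₀ x₁ : 𝕜} (hx : x₀ < x₁) (y₀ y₁ p v : 𝕜) :
    (p ∈ Icc x₀ x₁ ∧ v = y₀ + (y₁ - y₀) * (p - x₀) / (x₁ - x₀)) ↔
      (p, v) ∈ segment 𝕜 (x₀, y₀) (x₁, y₁) := by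
  simp only [segment_eq_image', mem_image, Prod.mk_sub_mk, Prod.smul_mk, Prod.mk_add_mk,
    Prod.mk.injEq, smul_eq_mul]
  constructor
  · rintro ⟨⟨hp₀, hp₁⟩, rfl⟩
    refine ⟨(p - x₀) / (x₁ - x₀), ⟨by positivity, ?_⟩, by field_simp; ring, by ring⟩
    exact (div_le_one (by linarith)).mpr (by linarith)
  · rintro ⟨θ, ⟨hθ₀, hθ₁⟩, rfl, rfl⟩
    refine ⟨⟨by nlinarith, by nlinarith⟩, ?_⟩
    field_simp
    ring

theorem stmt11_general (K : ℕ) (X Y : Fin (K + 1) → ℝ)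
    (hmono : StrictMono X) (p v : ℝ) :
    (∃ k : Fin K, p ∈ Icc (X k.castSucc) (X k.succ) ∧
        v = Y k.castSucc + (Y k.succ - Y k.castSucc) * (p - X k.castSucc)
              / (X k.succ - X k.castSucc))
    ↔ ∃ z : Fin (K + 1) → ℝ,
        (∀ j, 0 ≤ z j) ∧ (∑ j, z j) = 1 ∧
        (∃ k : Fin K, ∀ j, z j ≠ 0 → j = k.castSucc ∨ j = k.succ) ∧
        p = ∑ j, X j * z j ∧ v = ∑ j, Y j * z j := by
  have coords_eq_sum_iff (z : Fin (K + 1) → ℝ) :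
      (p = ∑ j, X j * z j ∧ v = ∑ j, Y j * z j) ↔ (p, v) = ∑ j, z j • (X j, Y j) := by
    simp only [Prod.ext_iff, Prod.fst_sum, Prod.snd_sum, Prod.smul_mk, smul_eq_mul, mul_comm]
  calc _ ↔ ∃ k : Fin K, (p, v) ∈ segment ℝ (X k.castSucc, Y k.castSucc) (X k.succ, Y k.succ) :=
        exists_congr fun k => mem_Icc_and_eq_chord_iff_mem_segment (hmono k.castSucc_lt_succ) ..
    _ ↔ ∃ k : Fin K, ∃ z : Fin (K + 1) → ℝ, (∀ j, 0 ≤ z j) ∧ ∑ j, z j = 1 ∧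
          (∀ j, z j ≠ 0 → j = k.castSucc ∨ j = k.succ) ∧ (p, v) = ∑ j, z j • (X j, Y j) :=
        exists_congr fun k => (exists_weights_supported_on_pair_iff_mem_segment
          (fun j => (X j, Y j)) k.castSucc_lt_succ.ne (p, v)).symm
    _ ↔ _ := by
        simp only [coords_eq_sum_iff]
        constructor
        · rintro ⟨k, z, hz0, hz1, hz, hpv⟩
          exact ⟨z, hz0, hz1, ⟨k, hz⟩, hpv⟩
        · rintro ⟨z, hz0, hz1, ⟨k, hz⟩, hpv⟩
          exact ⟨k, z, hz0, hz1, hz, hpv⟩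

theorem stmt11 (K : ℕ) (hK : 0 < K) (X Y : Fin (K + 1) → ℝ)
    (hmono : StrictMono X) (p v : ℝ) :
    (∃ k : Fin K, p ∈ Icc (X k.castSucc) (X k.succ) ∧
        v = Y k.castSucc + (Y k.succ - Y k.castSucc) * (p - X k.castSucc)
              / (X k.succ - X k.castSucc))
    ↔ ∃ z : Fin (K + 1) → ℝ,
        (∀ j, 0 ≤ z j) ∧ (∑ j, z j) = 1 ∧
        (∃ k : Fin K, ∀ j, z j ≠ 0 → j = k.castSucc ∨ j = k.succ) ∧
        p = ∑ j, X j * z j ∧ v = ∑ j, Y j * z j :=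
  stmt11_general K X Y hmono p v
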